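/- arXiv:2512.12502 — 3 statements merged into one kernel-verified Lean document; each statement's English description precedes it below -/
import Mathlib

section
/- Let H be a real Hilbert space, let T₁, …, T_N : H ⇒ H be set-valued operators, let S : H^N → H^N be an invertible bounded self-adjoint linear operator, and let K : H^N → H^N be a bounded linear operator with closed range whose kernel equals the diagonal subspace ℝ𝟏 = {z ∈ H^N : z₁ = … = z_N}. Define T : H^N ⇒ H^N by T(x) = T₁(x₁) × … × T_N(x_N). Then y ∈ H^N solves 0 ∈ S T(S y) + (K S)* N_{{0}}(K S y) if and only if y = S⁻¹(z, …, z) for some z ∈ H and z solves 0 ∈ Σ_{i=1}^N T_i(z). -/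
open scoped InnerProductSpace

/-- Finite `L²` products of complete spaces are complete. -/
instance piLpCompleteSpace {ι : Type*} [Fintype ι] {α : ι → Type*}
    [∀ i, NormedAddCommGroup (α i)] [∀ i, CompleteSpace (α i)] : CompleteSpace (PiLp 2 α) :=
  inferInstance

/-!
Since `S` is self-adjoint, `(K S)* = S K*`, and cancelling the invertible `S` the inclusion says:
`a ∈ T(S y)`, `K (S y) = 0` and `-a ∈ range K*`. The middle condition makes `S y` a diagonal
vector `(z, …, z)`. As `K` has closed range, so has `K*` (closed range theorem), hence
`range K* = (ker K)ᗮ`, the orthogonal complement of the diagonal, which consists exactly of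
the vectors whose components sum to zero.
-/

namespace ContinuousLinearMap

variable {E F : Type*} [NormedAddCommGroup E] [InnerProductSpace ℝ E] [CompleteSpace E]
  [NormedAddCommGroup F] [InnerProductSpace ℝ F]

lemma exists_mem_orthogonal_ker_sub_mem_ker (K : E →L[ℝ] F) (x : E) :
    ∃ p ∈ K.kerᗮ, x - p ∈ K.ker := by
  obtain ⟨d, hd, p, hp, rfl⟩ := K.ker.exists_add_mem_mem_orthogonal x
  exact ⟨p, hp, by simpa using hd⟩

omit [CompleteSpace E] in
lemma injective_domRestrict_orthogonal_ker (K : E →L[ℝ] F) :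
    Function.Injective (K.domRestrict K.kerᗮ) :=
  (injective_iff_map_eq_zero _).mpr fun p hp =>
    Subtype.ext (Submodule.disjoint_def.mp K.ker.orthogonal_disjoint.symm p p.2 hp)

lemma range_domRestrict_orthogonal_ker (K : E →L[ℝ] F) :
    Set.range (K.domRestrict K.kerᗮ) = Set.range K := by
  refine subset_antisymm (Set.range_comp_subset_range _ K) ?_
  rintro _ ⟨x, rfl⟩
  obtain ⟨p, hp, hxp⟩ := K.exists_mem_orthogonal_ker_sub_mem_ker x
  exact ⟨⟨p, hp⟩, (sub_eq_zero.mp (by simpa using hxp)).symm⟩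

theorem range_adjoint_eq_orthogonal_ker [CompleteSpace F] (K : E →L[ℝ] F)
    (hK : IsClosed (Set.range K)) : (adjoint K).range = K.kerᗮ := by
  refine le_antisymm (K.orthogonal_ker ▸ Submodule.le_topologicalClosure _) fun b hb => ?_
  have hclosed := K.range_domRestrict_orthogonal_ker ▸ hK
  have : CompleteSpace (K.domRestrict K.kerᗮ).range := hclosed.completeSpace_coe
  set e := (K.domRestrict K.kerᗮ).equivRange K.injective_domRestrict_orthogonal_ker hclosed
  -- `u` represents the bounded functional `K p ↦ ⟪b, p⟫` on `range K`, for `p ∈ (ker K)ᗮ`.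
  refine ⟨((adjoint (e.symm : _ →L[ℝ] K.kerᗮ) ⟨b, hb⟩ : (K.domRestrict K.kerᗮ).range) : F),
    ext_inner_right ℝ fun x => ?_⟩
  obtain ⟨p, hp, hxp⟩ := K.exists_mem_orthogonal_ker_sub_mem_ker x
  have hKx : K x = e ⟨p, hp⟩ := sub_eq_zero.mp (by simpa using hxp : K x - K p = 0)
  calc _ = ⟪b, p⟫_ℝ := by
        rw [coe_coe, adjoint_inner_left, hKx, ← Submodule.coe_inner, adjoint_inner_left,
          ContinuousLinearEquiv.coe_coe, e.symm_apply_apply]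
        rfl
    _ = ⟪b, x⟫_ℝ := by
        have : ⟪b, x - p⟫_ℝ = 0 := Submodule.inner_left_of_mem_orthogonal hxp hb
        rwa [inner_sub_right, sub_eq_zero, eq_comm] at this

lemma exists_add_adjoint_comp_eq_zero_iff [CompleteSpace F] {S : E ≃L[ℝ] E}
    (hS : ∀ x y, ⟪S x, y⟫_ℝ = ⟪x, S y⟫_ℝ) {K : E →L[ℝ] F} (hK : IsClosed (Set.range K)) (a : E) :
    (∃ u, S a + adjoint (K.comp (S : E →L[ℝ] E)) u = 0) ↔ a ∈ K.kerᗮ := by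
  have hSadj : adjoint (S : E →L[ℝ] E) = S := ((eq_adjoint_iff _ _).mpr fun x y => hS x y).symm
  simp only [adjoint_comp, hSadj, comp_apply, ContinuousLinearEquiv.coe_coe, ← map_add,
    S.map_eq_zero_iff, add_eq_zero_iff_eq_neg']
  change -a ∈ (adjoint K).range ↔ _
  rw [K.range_adjoint_eq_orthogonal_ker hK, Submodule.neg_mem_iff]

end ContinuousLinearMap

lemma PiLp.exists_forall_apply_eq_iff {ι H : Type*} (z : PiLp 2 (fun _ : ι => H)) :
    (∃ w, ∀ i, z i = w) ↔ ∃ w, z = WithLp.toLp 2 (fun _ => w) :=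
  exists_congr fun w => by simp [PiLp.ext_iff]

section Diagonal

variable {ι H : Type*} [Fintype ι] [NormedAddCommGroup H] [InnerProductSpace ℝ H]

lemma PiLp.inner_toLp_const (a : PiLp 2 (fun _ : ι => H)) (h : H) :
    ⟪a, WithLp.toLp 2 (fun _ => h)⟫_ℝ = ⟪∑ i, a i, h⟫_ℝ := by
  simp [PiLp.inner_apply, sum_inner]

lemma mem_orthogonal_ker_iff_sum_eq_zero {F : Type*} [NormedAddCommGroup F]
    [InnerProductSpace ℝ F] {K : PiLp 2 (fun _ : ι => H) →L[ℝ] F}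
    (hK : ∀ z, K z = 0 ↔ ∃ w, ∀ i, z i = w) (a : PiLp 2 (fun _ : ι => H)) :
    a ∈ K.kerᗮ ↔ ∑ i, a i = 0 := by
  have hker : ∀ z, z ∈ K.ker ↔ ∃ w, z = WithLp.toLp 2 (fun _ => w) := fun z =>
    (hK z).trans (PiLp.exists_forall_apply_eq_iff z)
  simp only [Submodule.mem_orthogonal', hker, forall_exists_index, forall_eq_apply_imp_iff,
    PiLp.inner_toLp_const]
  exact ⟨fun h => inner_self_eq_zero.mp (h _), fun h w => by simp [h]⟩

end Diagonal

/-- `u ∈ N_{{0}}(K S y)` is encoded as `K (S y) = 0` with `u` arbitrary. -/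
theorem stmt3 {H : Type*} [NormedAddCommGroup H] [InnerProductSpace ℝ H] [CompleteSpace H]
    {N : ℕ} (T : Fin N → H → Set H)
    (S : PiLp 2 (fun _ : Fin N => H) ≃L[ℝ] PiLp 2 (fun _ : Fin N => H))
    (hS : ∀ x y : PiLp 2 (fun _ : Fin N => H), ⟪S x, y⟫_ℝ = ⟪x, S y⟫_ℝ)
    (K : PiLp 2 (fun _ : Fin N => H) →L[ℝ] PiLp 2 (fun _ : Fin N => H))
    (hKrange : IsClosed (Set.range K))
    (hKker : ∀ z : PiLp 2 (fun _ : Fin N => H), K z = 0 ↔ ∃ w : H, ∀ i, z i = w)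
    (y : PiLp 2 (fun _ : Fin N => H)) :
    (∃ a u : PiLp 2 (fun _ : Fin N => H),
        (∀ i, a i ∈ T i ((S y) i)) ∧ K (S y) = 0 ∧
        S a + ContinuousLinearMap.adjoint
          (K.comp (S : PiLp 2 (fun _ : Fin N => H) →L[ℝ] PiLp 2 (fun _ : Fin N => H))) u = 0) ↔
    (∃ z : H, y = S.symm (WithLp.toLp 2 (fun _ => z)) ∧
        ∃ w : Fin N → H, (∀ i, w i ∈ T i z) ∧ ∑ i, w i = 0) := by
  have hinclusion : ∀ a, (∃ u, S a + ContinuousLinearMap.adjoint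
      (K.comp (S : PiLp 2 (fun _ : Fin N => H) →L[ℝ] _)) u = 0) ↔ ∑ i, a i = 0 := fun a =>
    (ContinuousLinearMap.exists_add_adjoint_comp_eq_zero_iff hS hKrange a).trans
      (mem_orthogonal_ker_iff_sum_eq_zero hKker a)
  have hdiag : K (S y) = 0 ↔ ∃ z, S y = WithLp.toLp 2 (fun _ => z) :=
    (hKker _).trans (PiLp.exists_forall_apply_eq_iff _)
  constructor
  · rintro ⟨a, u, ha, hKSy, hau⟩
    obtain ⟨z, hz⟩ := hdiag.mp hKSy
    exact ⟨z, S.eq_symm_apply.mpr hz, a, by simpa [hz] using ha, (hinclusion a).mp ⟨u, hau⟩⟩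
  · rintro ⟨z, rfl, w, hw, hsum⟩
    obtain ⟨u, hu⟩ := (hinclusion (WithLp.toLp 2 w)).mpr hsum
    exact ⟨WithLp.toLp 2 w, u, by simpa using hw, hdiag.mpr ⟨z, by simp⟩, hu⟩
end

section
/- Let H be a real Hilbert space, W ∈ ℝ^{N×N} a mixing matrix, Γ = diag(γ₁, …, γ_N) ⊗ I with γ_i > 0, K = (((I − W)/2)^{1/2}) ⊗ I, and M = ((1/β)·I − K Γ² K)^{1/2} where 0 < β < ‖Γ K² Γ‖⁻¹. Then the operator C̃ on H^N × H^N defined by C̃(z, z̃) = (Γ K N_{{0}}(K Γ z + M z̃), M N_{{0}}(K Γ z + M z̃)) equals [KΓ, M]* ∘ N_{{0}} ∘ [KΓ, M], satisfies [KΓ, M] [KΓ, M]* = (1/β)·I, and is maximally monotone. -/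
open scoped InnerProductSpace

def IsMonotoneOp {K : Type*} [NormedAddCommGroup K] [InnerProductSpace ℝ K]
    (A : K → Set K) : Prop :=
  ∀ ⦃x x' y y' : K⦄, x' ∈ A x → y' ∈ A y → 0 ≤ ⟪x - y, x' - y'⟫_ℝ

def IsMaxMonotoneOp {K : Type*} [NormedAddCommGroup K] [InnerProductSpace ℝ K]
    (A : K → Set K) : Prop :=
  IsMonotoneOp A ∧ ∀ B : K → Set K, IsMonotoneOp B → (∀ x, A x ⊆ B x) → ∀ x, B x ⊆ A x

/-- A mixing matrix: symmetric, `ker(I − W) = ℝ𝟏`, and `−I ≺ W ⪯ I` in the Loewner order. -/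
def IsMixingMatrix {N : ℕ} (W : Matrix (Fin N) (Fin N) ℝ) : Prop :=
  W.IsSymm ∧ (∀ v : Fin N → ℝ, (1 - W).mulVec v = 0 ↔ ∃ t : ℝ, ∀ i, v i = t) ∧
    (W + 1).PosDef ∧ (1 - W).PosSemidef

/-! The formula `J† u = (Γ K u, M u)` turns the defining identity `M² = β⁻¹ - K Γ² K` into
`J J† = β⁻¹ • 1`. The graph of `J† ∘ N_{0} ∘ J` is `ker J × range J†`, a product of orthogonal
subspaces, hence monotone. For maximality, a pair `(x, x')` of a monotone extension is tested
against the lines through `(0, J† u)` and through `(v, 0)` with `v ∈ ker J`; this forces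
`x ∈ (range J†)ᗮ = ker J` and `x' ∈ (ker J)ᗮ`, and `(ker J)ᗮ = range J†` because `J J†` is
invertible. -/

open ContinuousLinearMap
open scoped InnerProduct

def normalConeZero {F : Type*} [Zero F] (x : F) : Set F := {_n | x = 0}

theorem IsMonotoneOp.inner_add_inner_eq_zero {E : Type*} [NormedAddCommGroup E]
    [InnerProductSpace ℝ E] {B : E → Set E} (hB : IsMonotoneOp B)
    {x x' y y' : E} (hx : x' ∈ B x) (hy : ∀ s : ℝ, s • y' ∈ B (s • y))
    (hyy : ⟪y, y'⟫_ℝ = 0) : ⟪x, y'⟫_ℝ + ⟪y, x'⟫_ℝ = 0 := by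
  set a := ⟪x, y'⟫_ℝ + ⟪y, x'⟫_ℝ
  -- along the line `s ↦ (s • y, s • y')` the `s²`-term of the monotonicity inequality vanishes
  have hline : ∀ s : ℝ, 0 ≤ ⟪x, x'⟫_ℝ - s * a := fun s => by
    have := hB hx (hy s)
    simp only [inner_sub_left, inner_sub_right, real_inner_smul_left, real_inner_smul_right,
      hyy] at this
    linarith
  by_contra ha
  have := hline ((⟪x, x'⟫_ℝ + 1) / a)
  rw [div_mul_cancel₀ _ ha] at this
  linarith

section AdjointNormalCone

variable {E F : Type*} [NormedAddCommGroup E] [InnerProductSpace ℝ E] [CompleteSpace E]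
  [NormedAddCommGroup F] [InnerProductSpace ℝ F] [CompleteSpace F]

theorem mem_adjoint_image_normalConeZero {J : E →L[ℝ] F} {t p : E} :
    p ∈ J† '' normalConeZero (J t) ↔ J t = 0 ∧ ∃ n, (J†) n = p := by
  simp [normalConeZero]

theorem isMonotoneOp_adjoint_image_normalConeZero (J : E →L[ℝ] F) :
    IsMonotoneOp fun t => J† '' normalConeZero (J t) := by
  intro x x' y y' hx' hy'
  obtain ⟨hx, m, rfl⟩ := mem_adjoint_image_normalConeZero.mp hx'
  obtain ⟨hy, n, rfl⟩ := mem_adjoint_image_normalConeZero.mp hy'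
  rw [← map_sub, adjoint_inner_right, map_sub, hx, hy, sub_zero, inner_zero_left]

theorem eq_adjoint_of_forall_ker_inner_eq_zero {J : E →L[ℝ] F} {c : ℝ} (hc : c ≠ 0)
    (hJJ : ∀ u, J ((J†) u) = c • u) {p : E} (hp : ∀ v, J v = 0 → ⟪v, p⟫_ℝ = 0) :
    p = (J†) (c⁻¹ • J p) := by
  set w := p - (J†) (c⁻¹ • J p)
  have hJw : J w = 0 := by
    rw [map_sub, hJJ, smul_smul, mul_inv_cancel₀ hc, one_smul, sub_self]
  have hww : ⟪w, w⟫_ℝ = 0 := by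
    rw [inner_sub_right, hp w hJw, adjoint_inner_right, hJw, inner_zero_left, sub_zero]
  exact sub_eq_zero.mp (inner_self_eq_zero.mp hww)

theorem isMaxMonotoneOp_adjoint_image_normalConeZero {J : E →L[ℝ] F} {c : ℝ} (hc : c ≠ 0)
    (hJJ : ∀ u, J ((J†) u) = c • u) :
    IsMaxMonotoneOp fun t => J† '' normalConeZero (J t) := by
  refine ⟨isMonotoneOp_adjoint_image_normalConeZero J, fun B hB hAB x x' hx' => ?_⟩
  have hx_perp : ∀ u, ⟪x, (J†) u⟫_ℝ = 0 := fun u => by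
    simpa using hB.inner_add_inner_eq_zero hx' (y := 0)
      (fun s => hAB _ ⟨s • u, by simp [normalConeZero], by simp⟩) (inner_zero_left _)
  have hJx : J x = 0 := by
    simpa [adjoint_inner_right] using hx_perp (J x)
  have hx'_perp : ∀ v, J v = 0 → ⟪v, x'⟫_ℝ = 0 := fun v hv => by
    simpa using hB.inner_add_inner_eq_zero hx' (y' := 0)
      (fun s => hAB _ ⟨0, by simp [normalConeZero, hv], by simp⟩) (inner_zero_right _)
  exact mem_adjoint_image_normalConeZero.mpr
    ⟨hJx, _, (eq_adjoint_of_forall_ker_inner_eq_zero hc hJJ hx'_perp).symm⟩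

end AdjointNormalCone

theorem adjoint_apply_of_apply_eq_add {E F G : Type*} [NormedAddCommGroup E]
    [InnerProductSpace ℝ E] [CompleteSpace E] [NormedAddCommGroup F] [InnerProductSpace ℝ F]
    [CompleteSpace F] [NormedAddCommGroup G] [InnerProductSpace ℝ G] [CompleteSpace G]
    {J : WithLp 2 (E × F) →L[ℝ] G} {A : E →L[ℝ] G} {B : F →L[ℝ] G}
    (hJ : ∀ t, J t = A (WithLp.ofLp t).1 + B (WithLp.ofLp t).2) (u : G) :
    (J†) u = WithLp.toLp 2 ((A†) u, (B†) u) := by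
  refine ext_inner_right ℝ fun t => ?_
  rw [adjoint_inner_left, hJ, WithLp.prod_inner_apply, inner_add_right, adjoint_inner_left,
    adjoint_inner_left]

theorem adjoint_eq_self_of_apply_eq_smul {ι : Type*} [Fintype ι] {E : ι → Type*}
    [∀ i, NormedAddCommGroup (E i)] [∀ i, InnerProductSpace ℝ (E i)] [∀ i, CompleteSpace (E i)]
    {Γ : PiLp 2 E →L[ℝ] PiLp 2 E} {γ : ι → ℝ} (hΓ : ∀ x i, Γ x i = γ i • x i) : Γ† = Γ :=
  (eq_adjoint_iff Γ Γ |>.mpr fun x y => by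
    simp [PiLp.inner_apply, hΓ, real_inner_smul_left, real_inner_smul_right]).symm

theorem stmt8_general {H : Type*} [NormedAddCommGroup H] [InnerProductSpace ℝ H] [CompleteSpace H]
    {N : ℕ} (γ : Fin N → ℝ)
    (Γ K M : PiLp 2 (fun _ : Fin N => H) →L[ℝ] PiLp 2 (fun _ : Fin N => H))
    (hΓ : ∀ (x : PiLp 2 (fun _ : Fin N => H)) i, Γ x i = γ i • x i)
    (hKsa : ∀ x y : PiLp 2 (fun _ : Fin N => H), ⟪K x, y⟫_ℝ = ⟪x, K y⟫_ℝ)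
    (β : ℝ) (hβ : 0 < β)
    (hMsa : ∀ x y : PiLp 2 (fun _ : Fin N => H), ⟪M x, y⟫_ℝ = ⟪x, M y⟫_ℝ)
    (hM2 : ∀ x : PiLp 2 (fun _ : Fin N => H), M (M x) = β⁻¹ • x - K (Γ (Γ (K x))))
    (J : WithLp 2 (PiLp 2 (fun _ : Fin N => H) × PiLp 2 (fun _ : Fin N => H)) →L[ℝ]
      PiLp 2 (fun _ : Fin N => H))
    (hJ : ∀ t : WithLp 2 (PiLp 2 (fun _ : Fin N => H) × PiLp 2 (fun _ : Fin N => H)),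
      J t = K (Γ (WithLp.ofLp t).1) + M (WithLp.ofLp t).2) :
    (∀ t : WithLp 2 (PiLp 2 (fun _ : Fin N => H) × PiLp 2 (fun _ : Fin N => H)),
      {pq : WithLp 2 (PiLp 2 (fun _ : Fin N => H) × PiLp 2 (fun _ : Fin N => H)) |
          J t = 0 ∧ ∃ n : PiLp 2 (fun _ : Fin N => H),
            (WithLp.ofLp pq).1 = Γ (K n) ∧ (WithLp.ofLp pq).2 = M n} =
        ContinuousLinearMap.adjoint J '' {_n : PiLp 2 (fun _ : Fin N => H) | J t = 0}) ∧
    (∀ u : PiLp 2 (fun _ : Fin N => H), J (ContinuousLinearMap.adjoint J u) = β⁻¹ • u) ∧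
    IsMaxMonotoneOp (fun t : WithLp 2 (PiLp 2 (fun _ : Fin N => H) ×
        PiLp 2 (fun _ : Fin N => H)) =>
      {pq : WithLp 2 (PiLp 2 (fun _ : Fin N => H) × PiLp 2 (fun _ : Fin N => H)) |
        J t = 0 ∧ ∃ n : PiLp 2 (fun _ : Fin N => H),
          (WithLp.ofLp pq).1 = Γ (K n) ∧ (WithLp.ofLp pq).2 = M n}) := by
  have hK : K† = K := ((eq_adjoint_iff K K).mpr hKsa).symm
  have hM : M† = M := ((eq_adjoint_iff M M).mpr hMsa).symm
  have hJadj : ∀ u, (J†) u = WithLp.toLp 2 (Γ (K u), M u) := fun u => by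
    rw [adjoint_apply_of_apply_eq_add (A := K ∘L Γ) hJ, adjoint_comp,
      adjoint_eq_self_of_apply_eq_smul hΓ, hK, hM, comp_apply]
  have hJJ : ∀ u, J ((J†) u) = β⁻¹ • u := fun u => by
    rw [hJ, hJadj, hM2]
    abel
  have hC : ∀ t, {pq | J t = 0 ∧ ∃ n, (WithLp.ofLp pq).1 = Γ (K n) ∧ (WithLp.ofLp pq).2 = M n}
      = J† '' normalConeZero (J t) := fun t => by
    ext pq
    rw [mem_adjoint_image_normalConeZero]
    refine and_congr_right fun _ => exists_congr fun n => ?_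
    rw [hJadj]
    constructor
    · rintro ⟨h1, h2⟩
      rw [← h1, ← h2]
    · rintro rfl
      exact ⟨rfl, rfl⟩
  refine ⟨hC, hJJ, ?_⟩
  simp only [hC]
  exact isMaxMonotoneOp_adjoint_image_normalConeZero (inv_ne_zero hβ.ne') hJJ

/-- With `K = ((I−W)/2)^{1/2} ⊗ I`, `Γ = diag(γ) ⊗ I` (`γᵢ > 0`),
`M = ((1/β)I − K Γ² K)^{1/2}` and `0 < β < ‖Γ K² Γ‖⁻¹`, and `J = [KΓ, M]` the operator
`(z, z̃) ↦ KΓz + Mz̃`, the operator `C̃(z, z̃) = (Γ K N₀(KΓz + Mz̃), M N₀(KΓz + Mz̃))`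
equals `J* ∘ N₀ ∘ J`, one has `J J* = (1/β)·I`, and `C̃` is maximally monotone. -/
theorem stmt8 {H : Type*} [NormedAddCommGroup H] [InnerProductSpace ℝ H] [CompleteSpace H]
    {N : ℕ} (W : Matrix (Fin N) (Fin N) ℝ) (hW : IsMixingMatrix W)
    (γ : Fin N → ℝ) (hγ : ∀ i, 0 < γ i)
    (Γ K M : PiLp 2 (fun _ : Fin N => H) →L[ℝ] PiLp 2 (fun _ : Fin N => H))
    (hΓ : ∀ (x : PiLp 2 (fun _ : Fin N => H)) i, Γ x i = γ i • x i)
    (hKsa : ∀ x y : PiLp 2 (fun _ : Fin N => H), ⟪K x, y⟫_ℝ = ⟪x, K y⟫_ℝ)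
    (hKpsd : ∀ x : PiLp 2 (fun _ : Fin N => H), 0 ≤ ⟪K x, x⟫_ℝ)
    (hK2 : ∀ (x : PiLp 2 (fun _ : Fin N => H)) i,
      K (K x) i = (2 : ℝ)⁻¹ • (x i - ∑ j, W i j • x j))
    (β : ℝ) (hβ : 0 < β) (hβ' : β * ‖Γ.comp ((K.comp K).comp Γ)‖ < 1)
    (hMsa : ∀ x y : PiLp 2 (fun _ : Fin N => H), ⟪M x, y⟫_ℝ = ⟪x, M y⟫_ℝ)
    (hMpsd : ∀ x : PiLp 2 (fun _ : Fin N => H), 0 ≤ ⟪M x, x⟫_ℝ)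
    (hM2 : ∀ x : PiLp 2 (fun _ : Fin N => H), M (M x) = β⁻¹ • x - K (Γ (Γ (K x))))
    (J : WithLp 2 (PiLp 2 (fun _ : Fin N => H) × PiLp 2 (fun _ : Fin N => H)) →L[ℝ]
      PiLp 2 (fun _ : Fin N => H))
    (hJ : ∀ t : WithLp 2 (PiLp 2 (fun _ : Fin N => H) × PiLp 2 (fun _ : Fin N => H)),
      J t = K (Γ (WithLp.ofLp t).1) + M (WithLp.ofLp t).2) :
    (∀ t : WithLp 2 (PiLp 2 (fun _ : Fin N => H) × PiLp 2 (fun _ : Fin N => H)),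
      {pq : WithLp 2 (PiLp 2 (fun _ : Fin N => H) × PiLp 2 (fun _ : Fin N => H)) |
          J t = 0 ∧ ∃ n : PiLp 2 (fun _ : Fin N => H),
            (WithLp.ofLp pq).1 = Γ (K n) ∧ (WithLp.ofLp pq).2 = M n} =
        ContinuousLinearMap.adjoint J '' {_n : PiLp 2 (fun _ : Fin N => H) | J t = 0}) ∧
    (∀ u : PiLp 2 (fun _ : Fin N => H), J (ContinuousLinearMap.adjoint J u) = β⁻¹ • u) ∧
    IsMaxMonotoneOp (fun t : WithLp 2 (PiLp 2 (fun _ : Fin N => H) ×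
        PiLp 2 (fun _ : Fin N => H)) =>
      {pq : WithLp 2 (PiLp 2 (fun _ : Fin N => H) × PiLp 2 (fun _ : Fin N => H)) |
        J t = 0 ∧ ∃ n : PiLp 2 (fun _ : Fin N => H),
          (WithLp.ofLp pq).1 = Γ (K n) ∧ (WithLp.ofLp pq).2 = M n}) :=
  stmt8_general γ Γ K M hΓ hKsa β hβ hMsa hM2 J hJ
end

section
/- Let H be a real Hilbert space and let K = (((I − W)/2)^{1/2}) ⊗ I, Γ = Λ^{1/2} = diag(√α₁, …, √α_N) ⊗ I, and M = ((1/β)·I − K Γ² K)^{1/2} on H^N, where W is a mixing matrix, α_i > 0, and 0 < β < ‖Γ K² Γ‖⁻¹. For any sequences a^k, v^k ∈ H^N and u^k defined by u^k = u^{k−1} + β K Γ (2a^k − a^{k−1} − Γ(v^k − v^{k−1})) together with c^{k+1} = a^k − Γ v^k − Γ K u^k, the iterates satisfy c^{k+1} = c^k − a^k + (I − β Γ K² Γ)(2a^k − a^{k−1} − Γ(v^k − v^{k−1})) for all k ≥ 1; equivalently, applying Γ and writing x^k = Γa^k, z^k = Γc^k, z^{k+1} = z^k − x^k + (I − β Λ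 ((I−W)/2) ⊗ I)(2x^k − x^{k−1} − Λ(v^k − v^{k−1})). -/
/-!
Substituting the `u`-update into `c^{k+1} = a^k − Γv^k − ΓKu^k` and subtracting the same formula
one step earlier telescopes `u`: `c^{k+1} − c^k = a^k − a^{k−1} − Γ(v^k − v^{k−1}) − βΓK²Γ d^k`
with `d^k = 2a^k − a^{k−1} − Γ(v^k − v^{k−1})`, which is the claimed recursion since
`d^k − a^k = a^k − a^{k−1} − Γ(v^k − v^{k−1})`. The coordinate form follows by applying `Γ`, using
`Γ² = Λ` and `K² = ((I − W)/2) ⊗ I`.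
-/

open scoped InnerProductSpace

section Recursion

variable {R E F : Type*} [CommRing R] [AddCommGroup E] [Module R E]
  [FunLike F E E] [LinearMapClass F R E E]

theorem succ_eq_of_dual_update (Γ K : F) (β : R) (a v u c : ℕ → E)
    (hu : ∀ k, 1 ≤ k → u k = u (k - 1) +
      β • K (Γ ((2 : R) • a k - a (k - 1) - Γ (v k - v (k - 1)))))
    (hc : ∀ k, c (k + 1) = a k - Γ (v k) - Γ (K (u k))) {k : ℕ} (hk : 1 ≤ k) :
    c (k + 1) = c k - a k +
      (((2 : R) • a k - a (k - 1) - Γ (v k - v (k - 1))) -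
        β • Γ (K (K (Γ ((2 : R) • a k - a (k - 1) - Γ (v k - v (k - 1))))))) := by
  obtain ⟨k, rfl⟩ := Nat.exists_eq_add_of_le' hk
  rw [hc, hc k, hu _ hk]
  simp only [Nat.add_sub_cancel, map_add, map_sub, map_smul]
  module

end Recursion

section Coordinates

variable {ι H F : Type*} [SeminormedAddCommGroup H] [NormedSpace ℝ H]

theorem apply_apply_eq_smul_of_apply_eq_sqrt_smul {α : ι → ℝ} (hα : ∀ i, 0 ≤ α i)
    {Γ : PiLp 2 (fun _ : ι => H) → PiLp 2 (fun _ : ι => H)}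
    (hΓ : ∀ x i, Γ x i = Real.sqrt (α i) • x i) (x : PiLp 2 (fun _ : ι => H)) (i : ι) :
    Γ (Γ x) i = α i • x i := by
  rw [hΓ, hΓ, smul_smul, Real.mul_self_sqrt (hα i)]

variable [FunLike F (PiLp 2 (fun _ : ι => H)) (PiLp 2 (fun _ : ι => H))]
  [LinearMapClass F ℝ (PiLp 2 (fun _ : ι => H)) (PiLp 2 (fun _ : ι => H))]

theorem apply_sub_smul_conj_sq_apply [Fintype ι] {W : Matrix ι ι ℝ} {α : ι → ℝ} {Γ K : F}
    (hΓΓ : ∀ x i, Γ (Γ x) i = α i • x i)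
    (hK2 : ∀ x i, K (K x) i = (2 : ℝ)⁻¹ • (x i - ∑ j, W i j • x j))
    (β : ℝ) (y : PiLp 2 (fun _ : ι => H)) (i : ι) :
    Γ (y - β • Γ (K (K (Γ y)))) i =
      Γ y i - (β * α i / 2) • (Γ y i - ∑ j, W i j • Γ y j) := by
  rw [map_sub, map_smul, PiLp.sub_apply, PiLp.smul_apply, hΓΓ, hK2, smul_smul, smul_smul]
  ring_nf

theorem apply_two_smul_sub_sub_apply {α : ι → ℝ} {Γ : F}
    (hΓΓ : ∀ x i, Γ (Γ x) i = α i • x i) (a a' v v' : PiLp 2 (fun _ : ι => H)) (i : ι) :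
    Γ ((2 : ℝ) • a - a' - Γ (v - v')) i = (2 : ℝ) • Γ a i - Γ a' i - α i • (v i - v' i) := by
  simp only [map_sub, map_smul, PiLp.sub_apply, PiLp.smul_apply, hΓΓ, smul_sub]

end Coordinates

theorem stmt14_general {H : Type*} [NormedAddCommGroup H] [InnerProductSpace ℝ H]
    {N : ℕ} (W : Matrix (Fin N) (Fin N) ℝ)
    (α : Fin N → ℝ) (hα : ∀ i, 0 < α i)
    (Γ K : PiLp 2 (fun _ : Fin N => H) →L[ℝ] PiLp 2 (fun _ : Fin N => H))
    (hΓ : ∀ (x : PiLp 2 (fun _ : Fin N => H)) i, Γ x i = Real.sqrt (α i) • x i)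
    (hK2 : ∀ (x : PiLp 2 (fun _ : Fin N => H)) i,
      K (K x) i = (2 : ℝ)⁻¹ • (x i - ∑ j, W i j • x j))
    (β : ℝ)
    (a v u c : ℕ → PiLp 2 (fun _ : Fin N => H))
    (hu : ∀ k, 1 ≤ k → u k = u (k - 1) +
      β • K (Γ ((2 : ℝ) • a k - a (k - 1) - Γ (v k - v (k - 1)))))
    (hc : ∀ k, c (k + 1) = a k - Γ (v k) - Γ (K (u k))) :
    (∀ k, 1 ≤ k → c (k + 1) = c k - a k +
      (((2 : ℝ) • a k - a (k - 1) - Γ (v k - v (k - 1))) -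
        β • Γ (K (K (Γ ((2 : ℝ) • a k - a (k - 1) - Γ (v k - v (k - 1)))))))) ∧
    (∀ k, 1 ≤ k → ∀ i, Γ (c (k + 1)) i = Γ (c k) i - Γ (a k) i +
      (((2 : ℝ) • Γ (a k) i - Γ (a (k - 1)) i - α i • (v k i - v (k - 1) i)) -
        (β * α i / 2) •
          (((2 : ℝ) • Γ (a k) i - Γ (a (k - 1)) i - α i • (v k i - v (k - 1) i)) -
            ∑ j, W i j •
              ((2 : ℝ) • Γ (a k) j - Γ (a (k - 1)) j - α j • (v k j - v (k - 1) j))))) := by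
  have recursion := fun k (hk : 1 ≤ k) => succ_eq_of_dual_update Γ K β a v u c hu hc hk
  have hΓΓ := apply_apply_eq_smul_of_apply_eq_sqrt_smul (fun i => (hα i).le) hΓ
  refine ⟨recursion, fun k hk i => ?_⟩
  rw [recursion k hk, map_add, map_sub, PiLp.add_apply, PiLp.sub_apply,
    apply_sub_smul_conj_sq_apply hΓΓ hK2]
  simp only [apply_two_smul_sub_sub_apply hΓΓ]

/-- With `K = ((I−W)/2)^{1/2} ⊗ I`, `Γ = Λ^{1/2} = diag(√α) ⊗ I`,
`M = ((1/β)I − KΓ²K)^{1/2}`, `0 < β < ‖ΓK²Γ‖⁻¹`, and sequences `u^k`, `c^k` satisfying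
`u^k = u^{k−1} + βKΓ(2a^k − a^{k−1} − Γ(v^k − v^{k−1}))` and
`c^{k+1} = a^k − Γv^k − ΓKu^k`, one has, for all `k ≥ 1`,
`c^{k+1} = c^k − a^k + (I − βΓK²Γ)(2a^k − a^{k−1} − Γ(v^k − v^{k−1}))`; equivalently,
with `x^k = Γa^k`, `z^k = Γc^k`,
`z^{k+1} = z^k − x^k + (I − βΛ((I−W)/2)⊗I)(2x^k − x^{k−1} − Λ(v^k − v^{k−1}))`. -/
theorem stmt14 {H : Type*} [NormedAddCommGroup H] [InnerProductSpace ℝ H] [CompleteSpace H]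
    {N : ℕ} (W : Matrix (Fin N) (Fin N) ℝ) (hW : IsMixingMatrix W)
    (α : Fin N → ℝ) (hα : ∀ i, 0 < α i)
    (Γ K M : PiLp 2 (fun _ : Fin N => H) →L[ℝ] PiLp 2 (fun _ : Fin N => H))
    (hΓ : ∀ (x : PiLp 2 (fun _ : Fin N => H)) i, Γ x i = Real.sqrt (α i) • x i)
    (hKsa : ∀ x y : PiLp 2 (fun _ : Fin N => H), ⟪K x, y⟫_ℝ = ⟪x, K y⟫_ℝ)
    (hKpsd : ∀ x : PiLp 2 (fun _ : Fin N => H), 0 ≤ ⟪K x, x⟫_ℝ)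
    (hK2 : ∀ (x : PiLp 2 (fun _ : Fin N => H)) i,
      K (K x) i = (2 : ℝ)⁻¹ • (x i - ∑ j, W i j • x j))
    (β : ℝ) (hβ : 0 < β) (hβ' : β * ‖Γ.comp ((K.comp K).comp Γ)‖ < 1)
    (hMsa : ∀ x y : PiLp 2 (fun _ : Fin N => H), ⟪M x, y⟫_ℝ = ⟪x, M y⟫_ℝ)
    (hMpsd : ∀ x : PiLp 2 (fun _ : Fin N => H), 0 ≤ ⟪M x, x⟫_ℝ)
    (hM2 : ∀ x : PiLp 2 (fun _ : Fin N => H), M (M x) = β⁻¹ • x - K (Γ (Γ (K x))))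
    (a v u c : ℕ → PiLp 2 (fun _ : Fin N => H))
    (hu : ∀ k, 1 ≤ k → u k = u (k - 1) +
      β • K (Γ ((2 : ℝ) • a k - a (k - 1) - Γ (v k - v (k - 1)))))
    (hc : ∀ k, c (k + 1) = a k - Γ (v k) - Γ (K (u k))) :
    (∀ k, 1 ≤ k → c (k + 1) = c k - a k +
      (((2 : ℝ) • a k - a (k - 1) - Γ (v k - v (k - 1))) -
        β • Γ (K (K (Γ ((2 : ℝ) • a k - a (k - 1) - Γ (v k - v (k - 1)))))))) ∧
    (∀ k, 1 ≤ k → ∀ i, Γ (c (k + 1)) i = Γ (c k) i - Γ (a k) i +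
      (((2 : ℝ) • Γ (a k) i - Γ (a (k - 1)) i - α i • (v k i - v (k - 1) i)) -
        (β * α i / 2) •
          (((2 : ℝ) • Γ (a k) i - Γ (a (k - 1)) i - α i • (v k i - v (k - 1) i)) -
            ∑ j, W i j •
              ((2 : ℝ) • Γ (a k) j - Γ (a (k - 1)) j - α j • (v k j - v (k - 1) j))))) :=
  stmt14_general W α hα Γ K hΓ hK2 β a v u c hu hc
end
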